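/- Let p(x) ∈ F_q[x] be monic irreducible of degree k with p(0) ≠ 0 and p(1) ≠ 0, and let q(x) be its monic reciprocal with root α. Set β = α^{k-1}/(q'(α)(1 - α)). Then Tr_{F_{q^k}/F_q}(β) = 1/q(1), and in particular Tr(β) ≠ 0. -/

import Mathlib

/-!
Normalizing the reverse of `p` gives the minimal polynomial `f` of `α`, of degree `k = [E : F]`,
so `α` generates a power basis of `E`. The trace dual of the power basis `αⁱ` is `bᵢ / f'(α)`,
where `f(X) / (X - α) = ∑ bᵢ Xⁱ`; evaluating that quotient at `X = x ∈ F` yields Euler's identity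
`Tr (α ^ j / (f'(α) (x - α))) = x ^ j / f(x)` for `j < k`, and `x = 1`, `j = k - 1` is the claim.
-/

open Polynomial

namespace Polynomial

variable {R : Type*} [Semiring R]

theorem mirror_eq_reverse {f : R[X]} (h : f.coeff 0 ≠ 0) : f.mirror = f.reverse := by
  rw [mirror, natTrailingDegree_eq_zero.mpr (Or.inr h), pow_zero, mul_one]

variable [NoZeroDivisors R]

noncomputable def mirrorMulEquiv : R[X] ≃* R[X] where
  toFun := mirror
  invFun := mirror
  left_inv := mirror_mirror
  right_inv := mirror_mirror
  map_mul' p q := mirror_mul_of_domain p q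

theorem irreducible_mirror_iff {f : R[X]} : Irreducible f.mirror ↔ Irreducible f :=
  MulEquiv.irreducible_iff (mirrorMulEquiv (R := R)) (x := f)

theorem _root_.Irreducible.reverse {f : R[X]} (hf : Irreducible f) (h0 : f.coeff 0 ≠ 0) :
    Irreducible f.reverse :=
  mirror_eq_reverse h0 ▸ irreducible_mirror_iff.mpr hf

end Polynomial

theorem Polynomial.monic_C_inv_coeff_zero_mul_reverse {K : Type*} [Field K] {f : K[X]}
    (h0 : f.coeff 0 ≠ 0) : (C (f.coeff 0)⁻¹ * f.reverse).Monic :=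
  monic_C_mul_of_mul_leadingCoeff_eq_one <| by
    rw [reverse_leadingCoeff, trailingCoeff_eq_coeff_zero h0, inv_mul_cancel₀ h0]

theorem PowerBasis.exists_gen_eq_of_natDegree_minpoly_eq {K L : Type*} [Field K] [Field L]
    [Algebra K L] [FiniteDimensional K L] {x : L}
    (h : (minpoly K x).natDegree = Module.finrank K L) : ∃ pb : PowerBasis K L, pb.gen = x := by
  have hint : IsIntegral K x := .of_finite K x
  refine ⟨.ofAdjoinEqTop' hint ?_, PowerBasis.ofAdjoinEqTop'_gen _ _⟩
  rw [← IntermediateField.adjoin_simple_toSubalgebra_of_isAlgebraic hint.isAlgebraic,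
    (Field.primitive_element_iff_minpoly_natDegree_eq K x).mpr h,
    IntermediateField.top_toSubalgebra]

section

variable {K L : Type*} [Field K] [Field L] [Algebra K L] [FiniteDimensional K L]
  [Algebra.IsSeparable K L] (pb : PowerBasis K L)

open Algebra

theorem PowerBasis.trace_coeff_minpolyDiv_mul_pow_div (i j : Fin pb.dim) :
    trace K L ((minpolyDiv K pb.gen).coeff i * pb.gen ^ (j : ℕ) /
      aeval pb.gen (derivative (minpoly K pb.gen))) = if j = i then 1 else 0 := by
  rw [mul_div_right_comm, ← Module.Basis.traceDual_powerBasis_eq, ← pb.basis_eq_pow,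
    Module.Basis.trace_traceDual_mul]

theorem PowerBasis.trace_eval_minpolyDiv_mul_pow_div {j : ℕ} (hj : j < pb.dim) (x : K) :
    trace K L ((minpolyDiv K pb.gen).eval (algebraMap K L x) * pb.gen ^ j /
      aeval pb.gen (derivative (minpoly K pb.gen))) = x ^ j := by
  have hdeg : (minpolyDiv K pb.gen).natDegree < pb.dim := by
    rw [← pb.natDegree_minpoly, ← natDegree_minpolyDiv_succ pb.isIntegral_gen]
    exact Nat.lt_succ_self _
  rw [eval_eq_sum_range' hdeg, ← Fin.sum_univ_eq_sum_range, Finset.sum_mul, Finset.sum_div,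
    map_sum]
  have hterm (i : Fin pb.dim) :
      trace K L ((minpolyDiv K pb.gen).coeff i * algebraMap K L x ^ (i : ℕ) * pb.gen ^ j /
        aeval pb.gen (derivative (minpoly K pb.gen))) =
      x ^ (i : ℕ) * if (⟨j, hj⟩ : Fin pb.dim) = i then 1 else 0 := by
    rw [← pb.trace_coeff_minpolyDiv_mul_pow_div i ⟨j, hj⟩, ← smul_eq_mul (a := x ^ (i : ℕ)),
      ← LinearMap.map_smul, Algebra.smul_def, map_pow]
    ring_nf
  simp only [hterm, mul_ite, mul_one, mul_zero, Finset.sum_ite_eq, Finset.mem_univ, if_true]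

theorem PowerBasis.trace_pow_div_derivative_mul_sub {j : ℕ} (hj : j < pb.dim) {x : K}
    (hx : (minpoly K pb.gen).eval x ≠ 0) :
    trace K L (pb.gen ^ j / (aeval pb.gen (derivative (minpoly K pb.gen)) *
      (algebraMap K L x - pb.gen))) = x ^ j / (minpoly K pb.gen).eval x := by
  have hspec : (minpolyDiv K pb.gen).eval (algebraMap K L x) * (algebraMap K L x - pb.gen) =
      algebraMap K L ((minpoly K pb.gen).eval x) := by
    simpa [eval_map_algebraMap, aeval_algebraMap_apply] using
      congrArg (eval (algebraMap K L x)) (minpolyDiv_spec K pb.gen)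
  have hdiv : (minpolyDiv K pb.gen).eval (algebraMap K L x) ≠ 0 :=
    left_ne_zero_of_mul (hspec ▸ (_root_.map_ne_zero (algebraMap K L)).mpr hx)
  have hrescale : pb.gen ^ j / (aeval pb.gen (derivative (minpoly K pb.gen)) *
      (algebraMap K L x - pb.gen)) = ((minpoly K pb.gen).eval x)⁻¹ •
      ((minpolyDiv K pb.gen).eval (algebraMap K L x) * pb.gen ^ j /
        aeval pb.gen (derivative (minpoly K pb.gen))) := by
    rw [Algebra.smul_def, map_inv₀, ← hspec]
    field_simp
  rw [hrescale, LinearMap.map_smul, pb.trace_eval_minpolyDiv_mul_pow_div hj, smul_eq_mul,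
    inv_mul_eq_div]

end

theorem trace_beta_eq_inv_q_one_general {F : Type*} [Field F] [Fintype F] {k : ℕ}
    (p : Polynomial F) (hirr : Irreducible p) (hdeg : p.natDegree = k)
    (h0 : p.eval 0 ≠ 0) (h1 : p.eval 1 ≠ 0)
    {E : Type*} [Field E] [Algebra F E] (hE : Module.finrank F E = k)
    (qp : Polynomial F) (hqp : qp = Polynomial.C (p.coeff 0)⁻¹ * p.reverse)
    (α : E) (hα : Polynomial.aeval α qp = 0)
    (β : E) (hβ : β = α ^ (k - 1) / (Polynomial.aeval α qp.derivative * (1 - α))) :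
    Algebra.trace F E β = (qp.eval 1)⁻¹ ∧ Algebra.trace F E β ≠ 0 := by
  have hc0 : p.coeff 0 ≠ 0 := by rwa [coeff_zero_eq_eval_zero]
  have hk : 0 < k := hdeg ▸ hirr.natDegree_pos
  have : FiniteDimensional F E := .of_finrank_pos (hE ▸ hk)
  have hqirr : Irreducible qp :=
    hqp ▸ (irreducible_isUnit_mul (isUnit_C.mpr (inv_ne_zero hc0).isUnit)).mpr (hirr.reverse hc0)
  have hmin : minpoly F α = qp :=
    (minpoly.eq_of_irreducible_of_monic hqirr hα (hqp ▸ monic_C_inv_coeff_zero_mul_reverse hc0)).symm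
  have hqdeg : qp.natDegree = k := by
    rw [hqp, natDegree_C_mul (inv_ne_zero hc0), ← mirror_eq_reverse hc0, mirror_natDegree, hdeg]
  have hq1 : qp.eval 1 ≠ 0 := by
    rw [hqp, eval_mul, eval_C, ← mirror_eq_reverse hc0, mirror_eval_one]
    exact mul_ne_zero (inv_ne_zero hc0) h1
  obtain ⟨pb, rfl⟩ := PowerBasis.exists_gen_eq_of_natDegree_minpoly_eq (hmin ▸ hqdeg.trans hE.symm)
  have hdim : pb.dim = k := by rw [← pb.natDegree_minpoly, hmin, hqdeg]
  have htr : Algebra.trace F E β = (qp.eval 1)⁻¹ := by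
    have := pb.trace_pow_div_derivative_mul_sub (j := k - 1) (by omega) (x := 1) (hmin ▸ hq1)
    rwa [map_one, one_pow, one_div, hmin, ← hβ] at this
  exact ⟨htr, htr ▸ inv_ne_zero hq1⟩

theorem trace_beta_eq_inv_q_one {F : Type*} [Field F] [Fintype F] {k : ℕ}
    (p : Polynomial F) (hmon : p.Monic) (hirr : Irreducible p) (hdeg : p.natDegree = k)
    (h0 : p.eval 0 ≠ 0) (h1 : p.eval 1 ≠ 0)
    {E : Type*} [Field E] [Algebra F E] (hE : Module.finrank F E = k)
    (qp : Polynomial F) (hqp : qp = Polynomial.C (p.coeff 0)⁻¹ * p.reverse)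
    (α : E) (hα : Polynomial.aeval α qp = 0)
    (β : E) (hβ : β = α ^ (k - 1) / (Polynomial.aeval α qp.derivative * (1 - α))) :
    Algebra.trace F E β = (qp.eval 1)⁻¹ ∧ Algebra.trace F E β ≠ 0 :=
  trace_beta_eq_inv_q_one_general p hirr hdeg h0 h1 hE qp hqp α hα β hβ
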